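/- arXiv:1801.08593 — 3 statements merged into one kernel-verified Lean document; each statement's English description precedes it below -/
import Mathlib

section
/- Let p be prime, s = pⁿ for n ≥ 1, and a, b ∈ ℤ/s with p dividing a but p not dividing b, and d a unit mod s, c arbitrary. Define φ(x) = x(ax+b)(cx+d)⁻¹. Then φ'(x) ≡ bd/(cx+d)² (mod p) for all x with cx+d a unit; in particular φ'(x) is a unit mod p for all such x. -/
theorem stmt_9 (p : ℕ) (hp : p.Prime) [NeZero p] (n : ℕ) (hn : 1 ≤ n)
    (a b c d : ℤ) (hpa : (p : ℤ) ∣ a) (hpb : ¬ (p : ℤ) ∣ b)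
    (hd : IsUnit ((d : ZMod (p ^ n)))) :
    ∀ x : ZMod p, IsUnit ((c : ZMod p) * x + (d : ZMod p)) →
      ((a : ZMod p) * c * x ^ 2 + 2 * a * d * x + b * d) *
          (((c : ZMod p) * x + (d : ZMod p)) ^ 2)⁻¹ =
        (b : ZMod p) * (d : ZMod p) * (((c : ZMod p) * x + (d : ZMod p)) ^ 2)⁻¹ ∧
      IsUnit ((b : ZMod p) * (d : ZMod p) * (((c : ZMod p) * x + (d : ZMod p)) ^ 2)⁻¹) := by
  haveI : Fact p.Prime := ⟨hp⟩
  have ha0 : (a : ZMod p) = 0 := by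
    have := (ZMod.intCast_zmod_eq_zero_iff_dvd a p).2 hpa
    exact this
  have hb0 : (b : ZMod p) ≠ 0 := fun h =>
    hpb ((ZMod.intCast_zmod_eq_zero_iff_dvd b p).1 h)
  have hdvd : p ∣ p ^ n := dvd_pow_self p (Nat.one_le_iff_ne_zero.1 hn)
  have hd0 : (d : ZMod p) ≠ 0 := by
    have hu : IsUnit ((d : ZMod p)) := by
      have := hd.map (ZMod.castHom hdvd (ZMod p))
      simpa using this
    exact hu.ne_zero
  intro x hx
  have hx0 : ((c : ZMod p) * x + (d : ZMod p)) ≠ 0 := hx.ne_zero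
  constructor
  · rw [ha0]; ring_nf
  · refine (isUnit_iff_ne_zero.2 ?_)
    have : (((c : ZMod p) * x + (d : ZMod p)) ^ 2)⁻¹ ≠ 0 := by
      exact inv_ne_zero (pow_ne_zero _ hx0)
    exact mul_ne_zero (mul_ne_zero hb0 hd0) this
end

section
/- Let p be prime, s₁ = p^{n₁}, s₂ = p^{n₂} with n₁ < n₂, ℓ₁, ℓ₂ units mod p, and ξ an integer divisible by p. Then Σ_{x mod p^{n₂}} K_{s₁}(ℓ₁ x) · conj(K_{s₂}(ℓ₂ x)) · e(ξ x / p^{n₂}) = 0, where K_c(a) = c^{−1/2} Σ_{y units mod c} e((ay + y⁻¹)/c). -/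
noncomputable def eZ (N : ℕ) (x : ZMod N) : ℂ :=
  Complex.exp (2 * Real.pi * Complex.I * ((x.val : ℂ) / (N : ℂ)))

/-- Normalized Kloosterman sum `K_c(a) = c^{-1/2} S(a,1;c)`. -/
noncomputable def Knorm (c : ℕ) [NeZero c] (a : ZMod c) : ℂ :=
  ((Real.sqrt c : ℂ))⁻¹ * ∑ y : (ZMod c)ˣ, eZ c (a * y + (y⁻¹ : (ZMod c)ˣ))

open Complex

lemma eZ_def (N : ℕ) (x : ZMod N) : eZ N x = Complex.exp (2 * Real.pi * Complex.I * ((x.val : ℂ) / N)) := rfl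

lemma eZ_intCast (N : ℕ) [NeZero N] (m : ℤ) :
    eZ N ((m : ZMod N)) = Complex.exp (2 * Real.pi * Complex.I * (m / N)) := by
  have hN : (N : ℂ) ≠ 0 := by exact_mod_cast (NeZero.ne N)
  have hd : ((m - ((m : ZMod N).val : ℤ) : ℤ) : ZMod N) = 0 := by
    push_cast
    simp [ZMod.natCast_val, ZMod.intCast_zmod_cast]
  rw [ZMod.intCast_zmod_eq_zero_iff_dvd] at hd
  obtain ⟨k, hk⟩ := hd
  have hm : (m : ℂ) = ((m : ZMod N).val : ℂ) + N * k := by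
    have : (m : ℤ) = ((m : ZMod N).val : ℤ) + N * k := by linarith
    exact_mod_cast congrArg (Int.cast : ℤ → ℂ) this
  rw [eZ_def, hm]
  rw [show 2 * (Real.pi:ℂ) * Complex.I * ((((m : ZMod N).val : ℂ) + N * k) / N)
      = 2 * (Real.pi:ℂ) * Complex.I * (((m : ZMod N).val : ℂ) / N) + k * (2 * Real.pi * Complex.I) by
    field_simp]
  rw [Complex.exp_add, Complex.exp_int_mul_two_pi_mul_I, mul_one]

lemma zmod_self_cast (N : ℕ) [NeZero N] (x : ZMod N) : ((x.val : ℤ) : ZMod N) = x := by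
  push_cast; simp [ZMod.natCast_val]

lemma eZ_zero (N : ℕ) [NeZero N] : eZ N 0 = 1 := by
  have := eZ_intCast N 0; simpa using this

lemma eZ_add (N : ℕ) [NeZero N] (a b : ZMod N) : eZ N (a + b) = eZ N a * eZ N b := by
  have hN : (N : ℂ) ≠ 0 := by exact_mod_cast (NeZero.ne N)
  have ha := zmod_self_cast N a
  have hb := zmod_self_cast N b
  rw [← ha, ← hb, ← Int.cast_add, eZ_intCast, eZ_intCast, eZ_intCast, ← Complex.exp_add]
  congr 1
  push_cast
  ring

lemma eZ_conj (N : ℕ) [NeZero N] (a : ZMod N) : (starRingEnd ℂ) (eZ N a) = eZ N (-a) := by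
  have h1 : (starRingEnd ℂ) (eZ N a) * eZ N a = 1 := by
    rw [eZ_def, ← Complex.exp_conj, ← Complex.exp_add]
    rw [show (starRingEnd ℂ) (2 * (Real.pi:ℂ) * Complex.I * ((a.val : ℂ) / N))
        = -(2 * (Real.pi:ℂ) * Complex.I * ((a.val : ℂ) / N)) by
      simp only [map_mul, map_div₀, Complex.conj_I, Complex.conj_ofReal,
        Complex.conj_natCast, map_ofNat]
      ring]
    simp
  have h2 : eZ N a * eZ N (-a) = 1 := by
    rw [← eZ_add, add_neg_cancel, eZ_zero]
  calc (starRingEnd ℂ) (eZ N a) = (starRingEnd ℂ) (eZ N a) * (eZ N a * eZ N (-a)) := by rw [h2, mul_one]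
    _ = ((starRingEnd ℂ) (eZ N a) * eZ N a) * eZ N (-a) := by ring
    _ = eZ N (-a) := by rw [h1, one_mul]

lemma eZ_ne_one (N : ℕ) [NeZero N] (c : ZMod N) (hc : c ≠ 0) : eZ N c ≠ 1 := by
  intro h
  rw [eZ_def, Complex.exp_eq_one_iff] at h
  obtain ⟨n, hn⟩ := h
  have hN : (N : ℂ) ≠ 0 := by exact_mod_cast (NeZero.ne N)
  have h2 : (2 * (Real.pi:ℂ) * Complex.I) ≠ 0 := Complex.two_pi_I_ne_zero
  have hv : ((c.val : ℂ) / N) = n :=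
    mul_right_cancel₀ h2 (by rw [mul_comm ((c.val : ℂ) / N)]; exact hn)
  rw [div_eq_iff hN] at hv
  have hvz : (c.val : ℤ) = n * N := by exact_mod_cast hv
  have hdvd : N ∣ c.val := Int.natCast_dvd_natCast.mp ⟨n, by linarith⟩
  have := Nat.eq_zero_of_dvd_of_lt hdvd (ZMod.val_lt c)
  exact hc ((ZMod.val_eq_zero c).mp this)

lemma sum_eZ_eq_zero (M : ℕ) [NeZero M] (c : ZMod M) (hc : c ≠ 0) :
    ∑ x : ZMod M, eZ M (c * x) = 0 := by
  have key : ∑ x : ZMod M, eZ M (c * (x + 1)) = ∑ x : ZMod M, eZ M (c * x) :=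
    Fintype.sum_equiv (Equiv.addRight (1 : ZMod M)) _ _ (fun x => rfl)
  have h2 : ∀ x : ZMod M, eZ M (c * (x + 1)) = eZ M (c * x) * eZ M c := by
    intro x; rw [mul_add, mul_one, eZ_add]
  rw [Finset.sum_congr rfl (fun x _ => h2 x), ← Finset.sum_mul] at key
  have := eZ_ne_one M c hc
  by_contra hS
  exact this (mul_left_cancel₀ hS (by rw [key, mul_one]))

lemma eZ_lift (p n₁ n₂ : ℕ) (hp : 0 < p) (h12 : n₁ ≤ n₂) [NeZero (p ^ n₁)] [NeZero (p ^ n₂)]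
    (m : ℤ) :
    eZ (p ^ n₁) ((m : ZMod (p ^ n₁))) = eZ (p ^ n₂) (((p ^ (n₂ - n₁) * m : ℤ) : ZMod (p ^ n₂))) := by
  rw [eZ_intCast, eZ_intCast]
  congr 1
  have hs : (p : ℂ) ^ n₂ = (p : ℂ) ^ n₁ * (p : ℂ) ^ (n₂ - n₁) := by
    rw [← pow_add, Nat.add_sub_cancel' h12]
  have h1 : ((p:ℂ)) ≠ 0 := by exact_mod_cast hp.ne'
  push_cast
  rw [hs]
  field_simp

lemma key_inner (p : ℕ) (hp : p.Prime) (n₁ n₂ : ℕ) (h12 : n₁ < n₂)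
    [NeZero (p ^ n₁)] [NeZero (p ^ n₂)]
    (ℓ₁ ℓ₂ ξ : ℤ) (hℓ₂ : IsCoprime ℓ₂ (p : ℤ)) (hξ : (p : ℤ) ∣ ξ)
    (y : (ZMod (p ^ n₁))ˣ) (z : (ZMod (p ^ n₂))ˣ) :
    ∑ x : ZMod (p ^ n₂),
      eZ (p ^ n₁) ((ℓ₁ : ZMod (p ^ n₁)) *
          (ZMod.castHom (pow_dvd_pow p h12.le) (ZMod (p ^ n₁)) x) * y + (y⁻¹ : (ZMod (p ^ n₁))ˣ)) *
        (starRingEnd ℂ) (eZ (p ^ n₂) ((ℓ₂ : ZMod (p ^ n₂)) * x * z + (z⁻¹ : (ZMod (p ^ n₂))ˣ))) *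
        eZ (p ^ n₂) ((ξ : ZMod (p ^ n₂)) * x) = 0 := by
  set d := n₂ - n₁ with hd
  set Y : ℤ := (((y : ZMod (p ^ n₁))).val : ℤ) with hY
  set Z : ℤ := (((z : ZMod (p ^ n₂))).val : ℤ) with hZ
  set C : ℤ := p ^ d * ℓ₁ * Y - ℓ₂ * Z + ξ with hC
  have hzy : ((Y : ZMod (p ^ n₁))) = (y : ZMod (p ^ n₁)) := zmod_self_cast _ _
  have hzz : ((Z : ZMod (p ^ n₂))) = (z : ZMod (p ^ n₂)) := zmod_self_cast _ _
  have step : ∀ x : ZMod (p ^ n₂),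
      eZ (p ^ n₁) ((ℓ₁ : ZMod (p ^ n₁)) * (ZMod.castHom (pow_dvd_pow p h12.le) (ZMod (p ^ n₁)) x) * y + (y⁻¹ : (ZMod (p ^ n₁))ˣ)) *
        (starRingEnd ℂ) (eZ (p ^ n₂) ((ℓ₂ : ZMod (p ^ n₂)) * x * z + (z⁻¹ : (ZMod (p ^ n₂))ˣ))) *
        eZ (p ^ n₂) ((ξ : ZMod (p ^ n₂)) * x)
      = (eZ (p ^ n₁) ((y⁻¹ : (ZMod (p ^ n₁))ˣ) : ZMod (p ^ n₁)) *
          eZ (p ^ n₂) (-(((z⁻¹ : (ZMod (p ^ n₂))ˣ)) : ZMod (p ^ n₂)))) *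
          eZ (p ^ n₂) ((C : ZMod (p ^ n₂)) * x) := by
    intro x
    have hx₁ : (ZMod.castHom (pow_dvd_pow p h12.le) (ZMod (p ^ n₁)) x)
        = (((x.val : ℤ)) : ZMod (p ^ n₁)) := by
      push_cast
      rw [ZMod.natCast_val, ZMod.castHom_apply]
    have hx₂ : (((x.val : ℤ)) : ZMod (p ^ n₂)) = x := zmod_self_cast _ x
    rw [eZ_add, eZ_conj, neg_add, eZ_add]
    have hA : eZ (p ^ n₁) ((ℓ₁ : ZMod (p ^ n₁)) * (ZMod.castHom (pow_dvd_pow p h12.le) (ZMod (p ^ n₁)) x) * y)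
        = eZ (p ^ n₂) ((((p ^ d * ℓ₁ * Y : ℤ)) : ZMod (p ^ n₂)) * x) := by
      rw [hx₁, ← hzy,
        show (ℓ₁ : ZMod (p ^ n₁)) * (((x.val : ℤ)) : ZMod (p ^ n₁)) * ((Y : ZMod (p ^ n₁)))
          = (((ℓ₁ * (x.val : ℤ) * Y : ℤ)) : ZMod (p ^ n₁)) by push_cast; ring,
        eZ_lift p n₁ n₂ hp.pos h12.le, ← hd]
      conv_rhs => rw [← hx₂]
      push_cast
      ring_nf
    have hB : eZ (p ^ n₂) (-((ℓ₂ : ZMod (p ^ n₂)) * x * z))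
        = eZ (p ^ n₂) ((((-(ℓ₂ * Z) : ℤ)) : ZMod (p ^ n₂)) * x) := by
      congr 1
      rw [← hzz, ← hx₂]
      push_cast
      ring
    rw [hA, hB]
    have hcomb : eZ (p ^ n₂) ((((p ^ d * ℓ₁ * Y : ℤ)) : ZMod (p ^ n₂)) * x) *
        eZ (p ^ n₂) (((( -(ℓ₂ * Z) : ℤ)) : ZMod (p ^ n₂)) * x) * eZ (p ^ n₂) ((ξ : ZMod (p ^ n₂)) * x)
        = eZ (p ^ n₂) ((C : ZMod (p ^ n₂)) * x) := by
      rw [← eZ_add, ← eZ_add]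
      congr 1
      rw [hC]
      push_cast
      ring
    calc _ = (eZ (p ^ n₁) ((y⁻¹ : (ZMod (p ^ n₁))ˣ) : ZMod (p ^ n₁)) *
            eZ (p ^ n₂) (-((z⁻¹ : (ZMod (p ^ n₂))ˣ) : ZMod (p ^ n₂)))) *
          (eZ (p ^ n₂) ((((p ^ d * ℓ₁ * Y : ℤ)) : ZMod (p ^ n₂)) * x) *
            eZ (p ^ n₂) (((( -(ℓ₂ * Z) : ℤ)) : ZMod (p ^ n₂)) * x) *
            eZ (p ^ n₂) ((ξ : ZMod (p ^ n₂)) * x)) := by ring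
      _ = _ := by rw [hcomb]
  rw [Finset.sum_congr rfl (fun x _ => step x), ← Finset.mul_sum]
  have hCne : ((C : ZMod (p ^ n₂))) ≠ 0 := by
    intro h
    rw [ZMod.intCast_zmod_eq_zero_iff_dvd] at h
    have hps₂ : (p : ℤ) ∣ ((p ^ n₂ : ℕ) : ℤ) := by
      exact_mod_cast Int.natCast_dvd_natCast.mpr (dvd_pow_self p (by omega : n₂ ≠ 0))
    have hpC : (p : ℤ) ∣ C := hps₂.trans h
    have hd1 : (p : ℤ) ∣ (p:ℤ) ^ d * ℓ₁ * Y :=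
      Dvd.dvd.mul_right (Dvd.dvd.mul_right (dvd_pow_self (p:ℤ) (by omega : d ≠ 0)) _) _
    have hℓZ : (p : ℤ) ∣ ℓ₂ * Z := by
      have h5 : ℓ₂ * Z = (p:ℤ) ^ d * ℓ₁ * Y + ξ - C := by rw [hC]; push_cast; ring
      rw [h5]
      exact dvd_sub (dvd_add hd1 hξ) hpC
    have hpp : Prime (p : ℤ) := Nat.prime_iff_prime_int.mp hp
    rcases hpp.dvd_mul.mp hℓZ with h1 | h1
    · exact hpp.not_unit (hℓ₂.isUnit_of_dvd' h1 dvd_rfl)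
    · have h2 : p ∣ ((z : ZMod (p ^ n₂))).val := by rw [hZ] at h1; exact_mod_cast h1
      have h3 := ZMod.val_coe_unit_coprime z
      have h4 : p ∣ 1 := h3 ▸ Nat.dvd_gcd h2 (dvd_pow_self p (by omega : n₂ ≠ 0))
      exact hp.one_lt.ne' (Nat.dvd_one.mp h4)
  rw [sum_eZ_eq_zero _ _ hCne, mul_zero]

theorem stmt_10 (p : ℕ) (hp : p.Prime) (n₁ n₂ : ℕ) (h12 : n₁ < n₂)
    [NeZero (p ^ n₁)] [NeZero (p ^ n₂)]
    (ℓ₁ ℓ₂ ξ : ℤ) (hℓ₁ : IsCoprime ℓ₁ (p : ℤ)) (hℓ₂ : IsCoprime ℓ₂ (p : ℤ))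
    (hξ : (p : ℤ) ∣ ξ) :
    ∑ x : ZMod (p ^ n₂),
        Knorm (p ^ n₁) ((ℓ₁ : ZMod (p ^ n₁)) *
            ZMod.castHom (pow_dvd_pow p h12.le) (ZMod (p ^ n₁)) x) *
          (starRingEnd ℂ) (Knorm (p ^ n₂) ((ℓ₂ : ZMod (p ^ n₂)) * x)) *
          eZ (p ^ n₂) ((ξ : ZMod (p ^ n₂)) * x) = 0 := by
  have step : ∀ x : ZMod (p ^ n₂),
      Knorm (p ^ n₁) ((ℓ₁ : ZMod (p ^ n₁)) *
          ZMod.castHom (pow_dvd_pow p h12.le) (ZMod (p ^ n₁)) x) *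
        (starRingEnd ℂ) (Knorm (p ^ n₂) ((ℓ₂ : ZMod (p ^ n₂)) * x)) *
        eZ (p ^ n₂) ((ξ : ZMod (p ^ n₂)) * x)
      = ((Real.sqrt ((p ^ n₁ : ℕ) : ℝ) : ℂ))⁻¹ * ((Real.sqrt ((p ^ n₂ : ℕ) : ℝ) : ℂ))⁻¹ *
          ∑ y : (ZMod (p ^ n₁))ˣ, ∑ z : (ZMod (p ^ n₂))ˣ,
            eZ (p ^ n₁) ((ℓ₁ : ZMod (p ^ n₁)) *
                (ZMod.castHom (pow_dvd_pow p h12.le) (ZMod (p ^ n₁)) x) * y + (y⁻¹ : (ZMod (p ^ n₁))ˣ)) *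
              (starRingEnd ℂ) (eZ (p ^ n₂) ((ℓ₂ : ZMod (p ^ n₂)) * x * z + (z⁻¹ : (ZMod (p ^ n₂))ˣ))) *
              eZ (p ^ n₂) ((ξ : ZMod (p ^ n₂)) * x) := by
    intro x
    rw [Knorm, Knorm, map_mul, map_sum, map_inv₀, Complex.conj_ofReal]
    simp only [Finset.mul_sum, Finset.sum_mul]
    exact (Finset.sum_comm).trans
      (Finset.sum_congr rfl fun y _ => Finset.sum_congr rfl fun z _ => by ring)
  rw [Finset.sum_congr rfl (fun x _ => step x), ← Finset.mul_sum]
  rw [show ∑ x : ZMod (p ^ n₂), ∑ y : (ZMod (p ^ n₁))ˣ, ∑ z : (ZMod (p ^ n₂))ˣ,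
        eZ (p ^ n₁) ((ℓ₁ : ZMod (p ^ n₁)) *
            (ZMod.castHom (pow_dvd_pow p h12.le) (ZMod (p ^ n₁)) x) * y + (y⁻¹ : (ZMod (p ^ n₁))ˣ)) *
          (starRingEnd ℂ) (eZ (p ^ n₂) ((ℓ₂ : ZMod (p ^ n₂)) * x * z + (z⁻¹ : (ZMod (p ^ n₂))ˣ))) *
          eZ (p ^ n₂) ((ξ : ZMod (p ^ n₂)) * x)
      = ∑ y : (ZMod (p ^ n₁))ˣ, ∑ z : (ZMod (p ^ n₂))ˣ, ∑ x : ZMod (p ^ n₂),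
          eZ (p ^ n₁) ((ℓ₁ : ZMod (p ^ n₁)) *
              (ZMod.castHom (pow_dvd_pow p h12.le) (ZMod (p ^ n₁)) x) * y + (y⁻¹ : (ZMod (p ^ n₁))ˣ)) *
            (starRingEnd ℂ) (eZ (p ^ n₂) ((ℓ₂ : ZMod (p ^ n₂)) * x * z + (z⁻¹ : (ZMod (p ^ n₂))ˣ))) *
            eZ (p ^ n₂) ((ξ : ZMod (p ^ n₂)) * x) by
    rw [Finset.sum_comm]
    exact Finset.sum_congr rfl (fun y _ => Finset.sum_comm)]
  rw [Finset.sum_congr rfl (fun y _ => Finset.sum_congr rfl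
    (fun z _ => key_inner p hp n₁ n₂ h12 ℓ₁ ℓ₂ ξ hℓ₂ hξ y z))]
  simp
end

section
/- Let s₁ = s₂ = s be a natural number, ℓ₁, ℓ₂ units mod s, ξ an integer, and Δ = ℓ₁ − ℓ₂. Then (1/s) Σ_{x mod s} K_s(ℓ₁ x) conj(K_s(ℓ₂ x)) e(ξx/s) = (1/s) Σ_{x units mod s} e( x(ξx+Δ)(ξx+ℓ₁)⁻¹ / s ), where the right-hand sum is over units x mod s for which ξx+ℓ₁ is a unit, and K_c(a) := c^{−1/2} Σ_{y units mod c} e((ay+y⁻¹)/c). -/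
/-! Opening both Kloosterman sums writes the summand as a sum over pairs of units `(y, z)` of
`e((x (ℓ₁ y - ℓ₂ z + ξ) + y⁻¹ - z⁻¹) / s)`. Summing over `x` first, orthogonality of additive
characters keeps only the pairs with `ℓ₁ y - ℓ₂ z + ξ = 0`, each with weight `s`. On this locus
`x := y⁻¹` determines `z` through `ξ x + ℓ₁ = x ℓ₂ z`, so the pairs correspond to the units `x`
with `ξ x + ℓ₁` a unit, and then `y⁻¹ - z⁻¹ = x (ξ x + ℓ₁ - ℓ₂) (ξ x + ℓ₁)⁻¹`. -/

open Finset ZMod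

lemma eZ_eq_stdAddChar {N : ℕ} [NeZero N] (x : ZMod N) : eZ N x = stdAddChar x := by
  rw [stdAddChar_apply, toCircle_apply, eZ, mul_div_assoc]

lemma sum_stdAddChar_mul_eq_ite {N : ℕ} [NeZero N] (c : ZMod N) :
    ∑ x : ZMod N, stdAddChar (x * c) = if c = 0 then (N : ℂ) else 0 := by
  rw [AddChar.sum_mulShift c (isPrimitive_stdAddChar N), ZMod.card, Nat.cast_ite, Nat.cast_zero]

lemma Knorm_mul_conj_Knorm {c : ℕ} [NeZero c] (a b : ZMod c) :
    Knorm c a * starRingEnd ℂ (Knorm c b) =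
      (c : ℂ)⁻¹ * ∑ p : (ZMod c)ˣ × (ZMod c)ˣ,
        stdAddChar (a * p.1 - b * p.2 + ↑p.1⁻¹ - ↑p.2⁻¹ : ZMod c) := by
  have hnorm : ((Real.sqrt c : ℂ))⁻¹ * ((Real.sqrt c : ℂ))⁻¹ = (c : ℂ)⁻¹ := by
    rw [← mul_inv, ← Complex.ofReal_mul, Real.mul_self_sqrt c.cast_nonneg, Complex.ofReal_natCast]
  simp only [Knorm, eZ_eq_stdAddChar, map_mul, map_inv₀, Complex.conj_ofReal, map_sum,
    ← AddChar.map_neg_eq_conj]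
  rw [mul_mul_mul_comm, hnorm, sum_mul_sum, ← Fintype.sum_prod_type']
  congr 1
  refine sum_congr rfl fun p _ => ?_
  rw [← AddChar.map_add_eq_mul]
  congr 1
  ring

lemma sum_Knorm_mul_conj_Knorm_mul_eZ {s : ℕ} [NeZero s] (a b c : ZMod s) :
    ∑ x : ZMod s, Knorm s (a * x) * starRingEnd ℂ (Knorm s (b * x)) * eZ s (c * x) =
      ∑ p ∈ univ.filter (fun p : (ZMod s)ˣ × (ZMod s)ˣ => a * p.1 - b * p.2 + c = 0),
        eZ s (↑p.1⁻¹ - ↑p.2⁻¹ : ZMod s) := by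
  have hs : (s : ℂ) ≠ 0 := Nat.cast_ne_zero.mpr (NeZero.ne s)
  calc _ = (s : ℂ)⁻¹ * ∑ p : (ZMod s)ˣ × (ZMod s)ˣ,
          stdAddChar (↑p.1⁻¹ - ↑p.2⁻¹ : ZMod s) *
            ∑ x : ZMod s, stdAddChar (x * (a * p.1 - b * p.2 + c) : ZMod s) := by
        simp_rw [Knorm_mul_conj_Knorm, eZ_eq_stdAddChar, mul_assoc]
        rw [← mul_sum]
        congr 1
        simp_rw [sum_mul]
        rw [sum_comm]
        refine sum_congr rfl fun p _ => ?_
        rw [mul_sum]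
        refine sum_congr rfl fun x _ => ?_
        rw [← AddChar.map_add_eq_mul, ← AddChar.map_add_eq_mul]
        congr 1
        ring
    _ = _ := by
        simp_rw [sum_stdAddChar_mul_eq_ite, mul_ite, mul_zero]
        rw [← sum_filter, ← sum_mul, mul_comm, mul_inv_cancel_right₀ hs]
        simp_rw [eZ_eq_stdAddChar]

lemma mul_sub_mul_add_eq_zero_iff {R : Type*} [CommRing R] (y : Rˣ) (a b c z : R) :
    a * y - b * z + c = 0 ↔ c * ↑y⁻¹ + a = ↑y⁻¹ * b * z := by
  have hy : (y : R) * ↑y⁻¹ = 1 := y.mul_inv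
  constructor
  · intro h
    linear_combination (↑y⁻¹ : R) * h - a * hy
  · intro h
    linear_combination (y : R) * h + (b * z - c) * hy

lemma sum_filter_units_pair_eq {n : ℕ} [NeZero n] {M : Type*} [AddCommMonoid M]
    (f : ZMod n → M) {a b c : ZMod n} (hb : IsUnit b) :
    ∑ p ∈ univ.filter (fun p : (ZMod n)ˣ × (ZMod n)ˣ => a * p.1 - b * p.2 + c = 0),
        f (↑p.1⁻¹ - ↑p.2⁻¹ : ZMod n) =
      ∑ x ∈ univ.filter (fun x : (ZMod n)ˣ => IsUnit (c * x + a)),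
        f (x * (c * x + (a - b)) * (c * x + a)⁻¹) := by
  obtain ⟨B, rfl⟩ := hb
  have hsol : ∀ p ∈ univ.filter (fun p : (ZMod n)ˣ × (ZMod n)ˣ => a * p.1 - B * p.2 + c = 0),
      (c * ↑p.1⁻¹ + a : ZMod n) = ↑(p.1⁻¹ * B * p.2) := fun p hp => by
    rw [Units.val_mul, Units.val_mul, ← mul_sub_mul_add_eq_zero_iff]
    exact (mem_filter.1 hp).2
  refine sum_bij' (fun p _ => p.1⁻¹) (fun x hx => (x⁻¹, B⁻¹ * x⁻¹ * (mem_filter.1 hx).2.unit))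
    ?_ ?_ ?_ ?_ ?_
  · intro p hp
    exact mem_filter.2 ⟨mem_univ _, ⟨p.1⁻¹ * B * p.2, (hsol p hp).symm⟩⟩
  · intro x hx
    rw [mem_filter, mul_sub_mul_add_eq_zero_iff, inv_inv]
    refine ⟨mem_univ _, ?_⟩
    set W := (mem_filter.1 hx).2.unit
    have hW : (W : ZMod n) = c * x + a := IsUnit.unit_spec _
    rw [← hW, ← Units.val_mul, ← Units.val_mul]
    congr 1
    group
  · intro p hp
    refine Prod.ext (inv_inv _) (Units.ext ?_)
    rw [inv_inv, Units.val_mul, IsUnit.unit_spec, hsol p hp, ← Units.val_mul]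
    congr 1
    group
  · intro x _
    exact inv_inv x
  · intro p hp
    rw [show (c * ↑p.1⁻¹ + (a - B) : ZMod n) = c * ↑p.1⁻¹ + a - B by ring,
      hsol p hp, ZMod.inv_coe_unit]
    congr 1
    rw [Units.eq_mul_inv_iff_mul_eq]
    simp only [Units.val_mul]
    linear_combination (-(p.1⁻¹ : (ZMod n)ˣ) * B : ZMod n) * p.2.mul_inv

theorem stmt_12_general (s : ℕ) [NeZero s] (ℓ₁ ℓ₂ ξ : ℤ)
    (hℓ₂ : IsCoprime ℓ₂ (s : ℤ)) :
    ((s : ℂ))⁻¹ *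
        ∑ x : ZMod s,
          Knorm s ((ℓ₁ : ZMod s) * x) * (starRingEnd ℂ) (Knorm s ((ℓ₂ : ZMod s) * x)) *
            eZ s ((ξ : ZMod s) * x) =
      ((s : ℂ))⁻¹ *
        ∑ x ∈ Finset.univ.filter
            (fun x : (ZMod s)ˣ => IsUnit ((ξ : ZMod s) * x + (ℓ₁ : ZMod s))),
          eZ s ((x : ZMod s) *
            ((ξ : ZMod s) * x + ((ℓ₁ - ℓ₂ : ℤ) : ZMod s)) *
            ((ξ : ZMod s) * x + (ℓ₁ : ZMod s))⁻¹) := by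
  have hunit : IsUnit (ℓ₂ : ZMod s) := (coe_int_isUnit_iff_isCoprime ℓ₂ s).2 hℓ₂.symm
  rw [sum_Knorm_mul_conj_Knorm_mul_eZ, sum_filter_units_pair_eq _ hunit, Int.cast_sub]

theorem stmt_12 (s : ℕ) [NeZero s] (ℓ₁ ℓ₂ ξ : ℤ)
    (hℓ₁ : IsCoprime ℓ₁ (s : ℤ)) (hℓ₂ : IsCoprime ℓ₂ (s : ℤ)) :
    ((s : ℂ))⁻¹ *
        ∑ x : ZMod s,
          Knorm s ((ℓ₁ : ZMod s) * x) * (starRingEnd ℂ) (Knorm s ((ℓ₂ : ZMod s) * x)) *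
            eZ s ((ξ : ZMod s) * x) =
      ((s : ℂ))⁻¹ *
        ∑ x ∈ Finset.univ.filter
            (fun x : (ZMod s)ˣ => IsUnit ((ξ : ZMod s) * x + (ℓ₁ : ZMod s))),
          eZ s ((x : ZMod s) *
            ((ξ : ZMod s) * x + ((ℓ₁ - ℓ₂ : ℤ) : ZMod s)) *
            ((ξ : ZMod s) * x + (ℓ₁ : ZMod s))⁻¹) :=
  stmt_12_general s ℓ₁ ℓ₂ ξ hℓ₂
end
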